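/- arXiv:math/0001189 — 2 statements merged into one kernel-verified Lean document; each statement's English description precedes it below -/
import Mathlib

section
/- Let ψ₁, ψ₂ : ℂ → ℂ be smooth solutions of the Dirac system ∂ψ₁ = pψ₂, ∂̄ψ₂ = −pψ₁ for a smooth real potential p, where ∂, ∂̄ are the Wirtinger derivatives. Define ∂r and ∂̄r componentwise by ∂r = ( i(ψ₂² + ψ̄₁²), ψ̄₁² − ψ₂², −2ψ₂ψ̄₁ ), ∂̄r = ( −i(ψ̄₂² + ψ₁²), ψ₁² − ψ̄₂², −2ψ₁ψ̄₂ ). Then the compatibility condition ∂̄(∂r) = ∂(∂̄r) holds, i.e. applying ∂̄ to each component of ∂r equals applying ∂ to each component of ∂̄r. -/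
open Complex ComplexConjugate

/-- Wirtinger derivative ∂ = (∂ₓ - i∂_y)/2. -/
noncomputable def wd (f : ℂ → ℂ) (z : ℂ) : ℂ :=
  (fderiv ℝ f z 1 - Complex.I * fderiv ℝ f z Complex.I) / 2

/-- Wirtinger derivative ∂̄ = (∂ₓ + i∂_y)/2. -/
noncomputable def wdb (f : ℂ → ℂ) (z : ℂ) : ℂ :=
  (fderiv ℝ f z 1 + Complex.I * fderiv ℝ f z Complex.I) / 2

private lemma wd_add {f g : ℂ → ℂ} {z : ℂ} (hf : DifferentiableAt ℝ f z)
    (hg : DifferentiableAt ℝ g z) :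
    wd (fun w => f w + g w) z = wd f z + wd g z := by
  simp only [wd, fderiv_fun_add hf hg, ContinuousLinearMap.add_apply]; ring

private lemma wdb_add {f g : ℂ → ℂ} {z : ℂ} (hf : DifferentiableAt ℝ f z)
    (hg : DifferentiableAt ℝ g z) :
    wdb (fun w => f w + g w) z = wdb f z + wdb g z := by
  simp only [wdb, fderiv_fun_add hf hg, ContinuousLinearMap.add_apply]; ring

private lemma wd_sub {f g : ℂ → ℂ} {z : ℂ} (hf : DifferentiableAt ℝ f z)
    (hg : DifferentiableAt ℝ g z) :
    wd (fun w => f w - g w) z = wd f z - wd g z := by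
  simp only [wd, fderiv_fun_sub hf hg, ContinuousLinearMap.sub_apply]; ring

private lemma wdb_sub {f g : ℂ → ℂ} {z : ℂ} (hf : DifferentiableAt ℝ f z)
    (hg : DifferentiableAt ℝ g z) :
    wdb (fun w => f w - g w) z = wdb f z - wdb g z := by
  simp only [wdb, fderiv_fun_sub hf hg, ContinuousLinearMap.sub_apply]; ring

private lemma wd_const_mul {f : ℂ → ℂ} {z : ℂ} (hf : DifferentiableAt ℝ f z) (c : ℂ) :
    wd (fun w => c * f w) z = c * wd f z := by
  simp only [wd, fderiv_const_mul hf c, ContinuousLinearMap.smul_apply, smul_eq_mul]; ring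

private lemma wdb_const_mul {f : ℂ → ℂ} {z : ℂ} (hf : DifferentiableAt ℝ f z) (c : ℂ) :
    wdb (fun w => c * f w) z = c * wdb f z := by
  simp only [wdb, fderiv_const_mul hf c, ContinuousLinearMap.smul_apply, smul_eq_mul]; ring

private lemma wd_mul {f g : ℂ → ℂ} {z : ℂ} (hf : DifferentiableAt ℝ f z)
    (hg : DifferentiableAt ℝ g z) :
    wd (fun w => f w * g w) z = f z * wd g z + g z * wd f z := by
  simp only [wd, fderiv_fun_mul hf hg, ContinuousLinearMap.add_apply,
    ContinuousLinearMap.smul_apply, smul_eq_mul]; ring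

private lemma wdb_mul {f g : ℂ → ℂ} {z : ℂ} (hf : DifferentiableAt ℝ f z)
    (hg : DifferentiableAt ℝ g z) :
    wdb (fun w => f w * g w) z = f z * wdb g z + g z * wdb f z := by
  simp only [wdb, fderiv_fun_mul hf hg, ContinuousLinearMap.add_apply,
    ContinuousLinearMap.smul_apply, smul_eq_mul]; ring

private lemma wd_conj (f : ℂ → ℂ) (z : ℂ) :
    wd (fun w => conj (f w)) z = conj (wdb f z) := by
  have : (fun w => conj (f w)) = fun w => star (f w) := rfl
  rw [this]
  simp only [wd, wdb, fderiv_star, ContinuousLinearMap.coe_comp', Function.comp_apply,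
    ContinuousLinearEquiv.coe_coe, starL'_apply]
  simp only [RCLike.star_def, map_add, map_div₀, map_sub, map_mul, map_one, map_ofNat,
    Complex.conj_I]
  ring

private lemma wdb_conj (f : ℂ → ℂ) (z : ℂ) :
    wdb (fun w => conj (f w)) z = conj (wd f z) := by
  have : (fun w => conj (f w)) = fun w => star (f w) := rfl
  rw [this]
  simp only [wd, wdb, fderiv_star, ContinuousLinearMap.coe_comp', Function.comp_apply,
    ContinuousLinearEquiv.coe_coe, starL'_apply]
  simp only [RCLike.star_def, map_add, map_div₀, map_sub, map_mul, map_one, map_ofNat,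
    Complex.conj_I]
  ring

theorem stmt_4 (ψ₁ ψ₂ : ℂ → ℂ) (p : ℂ → ℝ)
    (hψ₁ : ContDiff ℝ (⊤ : ℕ∞) ψ₁) (hψ₂ : ContDiff ℝ (⊤ : ℕ∞) ψ₂) (hp : ContDiff ℝ (⊤ : ℕ∞) p)
    (hD₁ : ∀ z, wd ψ₁ z = (p z : ℂ) * ψ₂ z)
    (hD₂ : ∀ z, wdb ψ₂ z = -(p z : ℂ) * ψ₁ z) :
    ∀ z : ℂ,
      wdb (fun w => Complex.I * ((ψ₂ w) ^ 2 + (conj (ψ₁ w)) ^ 2)) z =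
        wd (fun w => -Complex.I * ((conj (ψ₂ w)) ^ 2 + (ψ₁ w) ^ 2)) z ∧
      wdb (fun w => (conj (ψ₁ w)) ^ 2 - (ψ₂ w) ^ 2) z =
        wd (fun w => (ψ₁ w) ^ 2 - (conj (ψ₂ w)) ^ 2) z ∧
      wdb (fun w => -2 * ψ₂ w * conj (ψ₁ w)) z =
        wd (fun w => -2 * ψ₁ w * conj (ψ₂ w)) z := by
  intro z
  have d₁ : DifferentiableAt ℝ ψ₁ z := (hψ₁.differentiable (by simp)) z
  have d₂ : DifferentiableAt ℝ ψ₂ z := (hψ₂.differentiable (by simp)) z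
  have d₁c : DifferentiableAt ℝ (fun w => conj (ψ₁ w)) z := d₁.star
  have d₂c : DifferentiableAt ℝ (fun w => conj (ψ₂ w)) z := d₂.star
  -- derivative values
  have e1 : wdb (fun w => conj (ψ₁ w)) z = (p z : ℂ) * conj (ψ₂ z) := by
    rw [wdb_conj, hD₁]; simp [map_mul]
  have e2 : wd (fun w => conj (ψ₂ w)) z = -(p z : ℂ) * conj (ψ₁ z) := by
    rw [wd_conj, hD₂]; simp [map_mul]
  have sq1 : ∀ (f : ℂ → ℂ), (fun w => (f w) ^ 2) = fun w => f w * f w := by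
    intro f; funext w; ring
  constructor
  · rw [wdb_const_mul (by fun_prop), wd_const_mul (by fun_prop),
      wdb_add (by fun_prop) (by fun_prop), wd_add (by fun_prop) (by fun_prop),
      sq1 ψ₂, sq1 (fun w => conj (ψ₁ w)), sq1 (fun w => conj (ψ₂ w)), sq1 ψ₁,
      wdb_mul d₂ d₂, wdb_mul d₁c d₁c, wd_mul d₂c d₂c, wd_mul d₁ d₁,
      hD₁, hD₂, e1, e2]
    ring
  constructor
  · rw [wdb_sub (by fun_prop) (by fun_prop), wd_sub (by fun_prop) (by fun_prop),
      sq1 ψ₂, sq1 (fun w => conj (ψ₁ w)), sq1 (fun w => conj (ψ₂ w)), sq1 ψ₁,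
      wdb_mul d₂ d₂, wdb_mul d₁c d₁c, wd_mul d₂c d₂c, wd_mul d₁ d₁,
      hD₁, hD₂, e1, e2]
    ring
  · have h1 : (fun w => -2 * ψ₂ w * conj (ψ₁ w)) =
        fun w => (-2 : ℂ) * (ψ₂ w * conj (ψ₁ w)) := by funext w; ring
    have h2 : (fun w => -2 * ψ₁ w * conj (ψ₂ w)) =
        fun w => (-2 : ℂ) * (ψ₁ w * conj (ψ₂ w)) := by funext w; ring
    rw [h1, h2, wdb_const_mul (by fun_prop), wd_const_mul (by fun_prop),
      wdb_mul d₂ d₁c, wd_mul d₁ d₂c, hD₁, hD₂, e1, e2]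
    ring
end

section
/- The CMC-1 Weierstrass system is SU(2)-invariant: if ψ₁, ψ₂ : ℂ → ℂ are smooth and satisfy ∂ψ₁ = (|ψ₁|² + |ψ₂|²)ψ₂ and ∂̄ψ₂ = −(|ψ₁|² + |ψ₂|²)ψ₁, and α, β ∈ ℂ satisfy |α|² + |β|² = 1, then ζ₁ = αψ₁ + βψ̄₂ and ζ₂ = −βψ̄₁ + αψ₂ satisfy the same system: ∂ζ₁ = (|ζ₁|² + |ζ₂|²)ζ₂ and ∂̄ζ₂ = −(|ζ₁|² + |ζ₂|²)ζ₁. -/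
open Complex ComplexConjugate

lemma wd_key (a b : ℂ) (f g : ℂ → ℂ) (z : ℂ) (hf : DifferentiableAt ℝ f z)
    (hg : DifferentiableAt ℝ g z) :
    wd (fun w => a * f w + b * conj (g w)) z = a * wd f z + b * conj (wdb g z) ∧
    wdb (fun w => a * f w + b * conj (g w)) z = a * wdb f z + b * conj (wd g z) := by
  have hg' : HasFDerivAt (fun w => conj (g w))
      ((Complex.conjCLE : ℂ ≃L[ℝ] ℂ).toContinuousLinearMap.comp (fderiv ℝ g z)) z :=
    (Complex.conjCLE : ℂ ≃L[ℝ] ℂ).toContinuousLinearMap.hasFDerivAt.comp z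
      hg.hasFDerivAt
  have h : HasFDerivAt (fun w => a * f w + b * conj (g w))
      ((a • fderiv ℝ f z) +
        (b • (Complex.conjCLE : ℂ ≃L[ℝ] ℂ).toContinuousLinearMap.comp (fderiv ℝ g z))) z :=
    (hf.hasFDerivAt.const_mul a).add (hg'.const_mul b)
  constructor <;>
  · simp only [wd, wdb]; rw [h.fderiv]
    simp only [ContinuousLinearMap.add_apply, ContinuousLinearMap.smul_apply,
      ContinuousLinearMap.coe_comp', Function.comp_apply, smul_eq_mul,
      ContinuousLinearEquiv.coe_coe, Complex.conjCLE_apply, map_add, map_sub, map_mul,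
      map_div₀, Complex.conj_I, Complex.conj_conj, map_ofNat]
    ring

theorem stmt_8 (ψ₁ ψ₂ : ℂ → ℂ)
    (hψ₁ : ContDiff ℝ (⊤ : ℕ∞) ψ₁) (hψ₂ : ContDiff ℝ (⊤ : ℕ∞) ψ₂)
    (hD₁ : ∀ z, wd ψ₁ z =
      ((‖ψ₁ z‖ ^ 2 + ‖ψ₂ z‖ ^ 2 : ℝ) : ℂ) * ψ₂ z)
    (hD₂ : ∀ z, wdb ψ₂ z =
      -((‖ψ₁ z‖ ^ 2 + ‖ψ₂ z‖ ^ 2 : ℝ) : ℂ) * ψ₁ z)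
    (α β : ℂ) (hαβ : ‖α‖ ^ 2 + ‖β‖ ^ 2 = 1)
    (ζ₁ ζ₂ : ℂ → ℂ)
    (hζ₁ : ∀ z, ζ₁ z = α * ψ₁ z + β * conj (ψ₂ z))
    (hζ₂ : ∀ z, ζ₂ z = -β * conj (ψ₁ z) + α * ψ₂ z) :
    (∀ z, wd ζ₁ z =
      ((‖ζ₁ z‖ ^ 2 + ‖ζ₂ z‖ ^ 2 : ℝ) : ℂ) * ζ₂ z) ∧
    (∀ z, wdb ζ₂ z =
      -((‖ζ₁ z‖ ^ 2 + ‖ζ₂ z‖ ^ 2 : ℝ) : ℂ) * ζ₁ z) := by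
  have habs : α * conj α + β * conj β = 1 := by
    rw [Complex.mul_conj, Complex.mul_conj, ← Complex.ofReal_add, ← Complex.sq_norm,
      ← Complex.sq_norm, hαβ, Complex.ofReal_one]
  have e : ∀ w : ℂ, ((‖w‖ ^ 2 : ℝ) : ℂ) = w * conj w := by
    intro w; rw [Complex.sq_norm]; exact (Complex.mul_conj w).symm
  have hQ : ∀ z, ((‖ζ₁ z‖ ^ 2 + ‖ζ₂ z‖ ^ 2 : ℝ) : ℂ)
      = ((‖ψ₁ z‖ ^ 2 + ‖ψ₂ z‖ ^ 2 : ℝ) : ℂ) := by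
    intro z
    rw [Complex.ofReal_add, Complex.ofReal_add, e, e, e, e, hζ₁ z, hζ₂ z]
    simp only [map_add, map_mul, map_neg, Complex.conj_conj]
    linear_combination (ψ₁ z * conj (ψ₁ z) + ψ₂ z * conj (ψ₂ z)) * habs
  have hd1 : ∀ z, DifferentiableAt ℝ ψ₁ z := fun z => (hψ₁.differentiable (by simp)) z
  have hd2 : ∀ z, DifferentiableAt ℝ ψ₂ z := fun z => (hψ₂.differentiable (by simp)) z
  have hz1 : ζ₁ = fun w => α * ψ₁ w + β * conj (ψ₂ w) := funext hζ₁
  have hz2 : ζ₂ = fun w => α * ψ₂ w + (-β) * conj (ψ₁ w) := by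
    funext w; rw [hζ₂ w]; ring
  constructor
  · intro z
    rw [hQ z, hz1, (wd_key α β ψ₁ ψ₂ z (hd1 z) (hd2 z)).1, hD₁ z, hD₂ z, hζ₂ z]
    simp only [map_mul, map_neg, Complex.conj_ofReal]
    ring
  · intro z
    rw [hQ z, hz2, (wd_key α (-β) ψ₂ ψ₁ z (hd2 z) (hd1 z)).2, hD₂ z, hD₁ z, hζ₁ z]
    simp only [map_mul, map_neg, Complex.conj_ofReal]
    ring
end
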